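/- Let N be a finite set of UEs, and for each n ∈ N let C_{n,d} ⊆ N be a finite set with n ∉ C_{n,d} (the d-distance neighbors of n), and let α : N → ℝ. Define the characteristic function v(S) = Σ_{n ∈ N, S ∩ ({n} ∪ C_{n,d}) ≠ ∅} α_n for finite S ⊆ N, and the Shapley value of UE k as φ_k = Σ_{R ⊆ N \ {k}} ((|N| − |R| − 1)! · |R|! / |N|!) · (v(R ∪ {k}) − v(R)). Then for every k ∈ N, φ_k = Σ_{n ∈ N, k = n or k ∈ C_{n,d}} α_n / (1 + |C_{n,d}|). -/

import Mathlib

/-!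
The game is the combination `v = ∑ₙ αₙ · h_{Tₙ}` of the games `h_T(S) = [S meets T]`, with
`Tₙ = {n} ∪ C_{n,d}`, and the Shapley value is linear in the game. In `h_T` a player `k ∈ T` adds
`1` exactly to the coalitions disjoint from `T`, and the Shapley weights of the coalitions
`R ⊆ N \ T` add up to `1 / |T|` (the chance that `k` comes first among `T` in a random order),
which after the substitution `j = |N \ T| - |R|` is the hockey-stick identity. A player outside
`T` never changes `h_T`.
-/

/-- Characteristic function of the distance-cutoff game: UE `n` is influenced by
coalition `S` exactly when `S ∩ ({n} ∪ C_{n,d}) ≠ ∅`, and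
`v(S) = Σ_{n ∈ N, S ∩ ({n} ∪ C_{n,d}) ≠ ∅} α_n`. -/
def cutoffValue {α : Type*} [DecidableEq α] (N : Finset α) (Cnd : α → Finset α)
    (a : α → ℝ) (S : Finset α) : ℝ :=
  ∑ n ∈ N.filter (fun n => (S ∩ (insert n (Cnd n))).Nonempty), a n

/-- The Shapley value of player `k` in the coalitional game `(N, v)`:
`φ_k = Σ_{R ⊆ N \ {k}} ((|N| − |R| − 1)! · |R|! / |N|!) · (v(R ∪ {k}) − v(R))`. -/
noncomputable def shapleyValue {α : Type*} [DecidableEq α] (N : Finset α)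
    (v : Finset α → ℝ) (k : α) : ℝ :=
  ∑ R ∈ (N \ {k}).powerset,
    (((N.card - R.card - 1).factorial * R.card.factorial : ℕ) : ℝ) /
        (N.card.factorial : ℝ) * (v (insert k R) - v R)

open Finset Nat

theorem Nat.succ_mul_sum_choose_mul_factorial_mul_factorial (s t : ℕ) :
    (t + 1) * ∑ m ∈ range (s + 1), s.choose m * (m ! * (s - m + t)!) = (s + t + 1)! := by
  have term : ∀ m ∈ range (s + 1),
      s.choose m * (m ! * (s - m + t)!) = s ! * t ! * (s - m + t).choose t := by
    intro m hm
    rw [← add_choose_mul_factorial_mul_factorial (s - m) t,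
      ← choose_mul_factorial_mul_factorial (Nat.lt_succ_iff.mp (mem_range.mp hm))]
    ring
  have reflect : ∑ m ∈ range (s + 1), (s - m + t).choose t =
      ∑ j ∈ range (s + 1), (j + t).choose t := by
    rw [← sum_range_reflect]
    exact sum_congr rfl fun m hm => by
      rw [show s - (s + 1 - 1 - m) = m by have := mem_range.mp hm; omega]
  calc (t + 1) * ∑ m ∈ range (s + 1), s.choose m * (m ! * (s - m + t)!)
      = (t + 1) * (s ! * t ! * ∑ j ∈ range (s + 1), (j + t).choose t) := by
        rw [sum_congr rfl term, ← mul_sum, reflect]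
    _ = (s + (t + 1)).choose (t + 1) * s ! * (t + 1)! := by
        rw [sum_range_add_choose, factorial_succ, ← add_assoc]; ring
    _ = (s + t + 1)! := add_choose_mul_factorial_mul_factorial s (t + 1)

section

variable {α : Type*} [DecidableEq α]

theorem sum_powerset_sdiff_shapley_coeff {N T : Finset α} (hTN : T ⊆ N) (hT : T.Nonempty) :
    ∑ R ∈ (N \ T).powerset,
      (((N.card - R.card - 1)! * R.card ! : ℕ) : ℝ) / (N.card ! : ℝ) = (T.card : ℝ)⁻¹ := by
  obtain ⟨t, ht⟩ : ∃ t, T.card = t + 1 := Nat.exists_eq_succ_of_ne_zero hT.card_pos.ne'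
  rw [sum_powerset_apply_card (fun m => (((N.card - m - 1)! * m ! : ℕ) : ℝ) / (N.card ! : ℝ))]
  set s := (N \ T).card
  have hN : N.card = s + t + 1 := by rw [← card_sdiff_add_card_eq_card hTN, ht, add_assoc]
  have term : ∀ m ∈ range (s + 1),
      s.choose m • ((((s + t + 1 - m - 1)! * m ! : ℕ) : ℝ) / ((s + t + 1)! : ℝ)) =
        ((s.choose m * (m ! * (s - m + t)!) : ℕ) : ℝ) / ((s + t + 1)! : ℝ) := by
    intro m hm
    rw [show s + t + 1 - m - 1 = s - m + t by have := mem_range.mp hm; omega, nsmul_eq_mul]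
    push_cast
    ring
  rw [hN, ht, sum_congr rfl term, ← sum_div, div_eq_iff (by positivity),
    ← succ_mul_sum_choose_mul_factorial_mul_factorial s t]
  push_cast
  field_simp

def hittingGame (T S : Finset α) : ℝ := if Disjoint S T then 0 else 1

theorem hittingGame_insert_sub (T R : Finset α) (k : α) :
    hittingGame T (insert k R) - hittingGame T R = if k ∈ T ∧ Disjoint R T then 1 else 0 := by
  by_cases hk : k ∈ T <;> by_cases hR : Disjoint R T <;>
    simp [hittingGame, disjoint_insert_left, hk, hR]

theorem filter_disjoint_powerset_sdiff_singleton {N T : Finset α} {k : α} (hk : k ∈ T) :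
    (N \ {k}).powerset.filter (Disjoint · T) = (N \ T).powerset := by
  ext R
  simp only [mem_filter, mem_powerset, subset_sdiff, disjoint_singleton_right]
  exact ⟨fun ⟨⟨hRN, _⟩, hRT⟩ => ⟨hRN, hRT⟩,
    fun ⟨hRN, hRT⟩ => ⟨⟨hRN, fun hkR => disjoint_left.mp hRT hkR hk⟩, hRT⟩⟩

theorem shapleyValue_hittingGame {N T : Finset α} (hTN : T ⊆ N) (k : α) :
    shapleyValue N (hittingGame T) k = if k ∈ T then (T.card : ℝ)⁻¹ else 0 := by
  simp only [shapleyValue, hittingGame_insert_sub]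
  split_ifs with hk
  · rw [← sum_powerset_sdiff_shapley_coeff hTN ⟨k, hk⟩,
      ← filter_disjoint_powerset_sdiff_singleton hk, sum_filter]
    simp [hk]
  · simp [hk]

theorem shapleyValue_sum_mul {ι : Type*} (N : Finset α) (I : Finset ι) (c : ι → ℝ)
    (v : ι → Finset α → ℝ) (k : α) :
    shapleyValue N (fun S => ∑ i ∈ I, c i * v i S) k = ∑ i ∈ I, c i * shapleyValue N (v i) k := by
  simp only [shapleyValue, ← sum_sub_distrib, ← mul_sub, mul_sum]
  rw [sum_comm]
  exact sum_congr rfl fun _ _ => sum_congr rfl fun _ _ => by ring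

theorem cutoffValue_eq_sum_mul_hittingGame (N : Finset α) (Cnd : α → Finset α) (a : α → ℝ) :
    cutoffValue N Cnd a = fun S => ∑ n ∈ N, a n * hittingGame (insert n (Cnd n)) S := by
  funext S
  simp only [cutoffValue, hittingGame, sum_filter, ← not_disjoint_iff_nonempty_inter, ite_not,
    mul_ite, mul_zero, mul_one]

end

theorem cutoff_shapley_closed_form_general {α : Type*} [DecidableEq α]
    (N : Finset α) (Cnd : α → Finset α)
    (hCnd : ∀ n ∈ N, Cnd n ⊆ N) (hnot : ∀ n ∈ N, n ∉ Cnd n)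
    (a : α → ℝ) (k : α) :
    shapleyValue N (cutoffValue N Cnd a) k =
      ∑ n ∈ N.filter (fun n => k = n ∨ k ∈ Cnd n),
        a n / (1 + ((Cnd n).card : ℝ)) := by
  rw [cutoffValue_eq_sum_mul_hittingGame, shapleyValue_sum_mul, sum_filter]
  refine sum_congr rfl fun n hn => ?_
  rw [shapleyValue_hittingGame (insert_subset hn (hCnd n hn)), card_insert_of_notMem (hnot n hn)]
  simp only [mem_insert]
  split_ifs <;> push_cast <;> ring

/-- Theorem 1 with exact distance cutoff: if `n ∉ C_{n,d}` and `C_{n,d} ⊆ N`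
for every `n ∈ N`, then for every `k ∈ N`,
`φ_k = Σ_{n ∈ N, k = n ∨ k ∈ C_{n,d}} α_n / (1 + |C_{n,d}|)`. -/
theorem cutoff_shapley_closed_form {α : Type*} [DecidableEq α]
    (N : Finset α) (Cnd : α → Finset α)
    (hCnd : ∀ n ∈ N, Cnd n ⊆ N) (hnot : ∀ n ∈ N, n ∉ Cnd n)
    (a : α → ℝ) (k : α) (hk : k ∈ N) :
    shapleyValue N (cutoffValue N Cnd a) k =
      ∑ n ∈ N.filter (fun n => k = n ∨ k ∈ Cnd n),
        a n / (1 + ((Cnd n).card : ℝ)) :=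
  cutoff_shapley_closed_form_general N Cnd hCnd hnot a k
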